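/- Let A = {a,b} and let θ be the anti-automorphism of A* exchanging a and b. For n = 2k+1 with k ≥ 1, the set X = (Aⁿ ∖ (A a^k b^k ∪ a^k b^k A)) ∪ {a^k b^k} ∪ A a^k b^k A is a finite non-uniform complete bifix code which is θ-invariant. -/

import Mathlib

open List

/-- The submonoid of the free monoid `A*` (words as lists) generated by `S`:
all concatenations of finitely many words of `S`. -/
def wordStar {A : Type*} (S : Set (List A)) : Set (List A) :=
  {w | ∃ l : List (List A), (∀ x ∈ l, x ∈ S) ∧ l.flatten = w}

/-- `X` is a (variable-length) code: every equation among words of `X` is trivial. -/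
def isCodeL {A : Type*} (X : Set (List A)) : Prop :=
  ∀ l m : List (List A), (∀ w ∈ l, w ∈ X) → (∀ w ∈ m, w ∈ X) → l.flatten = m.flatten → l = m

/-- `θ` is an (anti-)automorphism of the free monoid `A*`: a bijection fixing the
empty word which is either a morphism or an anti-morphism. -/
def isAAA {A : Type*} (θ : List A → List A) : Prop :=
  Function.Bijective θ ∧ θ [] = [] ∧
    ((∀ u v : List A, θ (u ++ v) = θ u ++ θ v) ∨
     (∀ u v : List A, θ (u ++ v) = θ v ++ θ u))

/-- `M` is a submonoid of the free monoid `A*`. -/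
def isSubmonoidL {A : Type*} (M : Set (List A)) : Prop :=
  [] ∈ M ∧ ∀ u ∈ M, ∀ v ∈ M, u ++ v ∈ M

/-- The minimal generating set `(M∖{ε}) ∖ (M∖{ε})²` of a submonoid `M` of `A*`. -/
def mgsL {A : Type*} (M : Set (List A)) : Set (List A) :=
  (M \ {[]}) \ {w | ∃ u ∈ M \ ({[]} : Set (List A)), ∃ v ∈ M \ ({[]} : Set (List A)), w = u ++ v}

/-- `M` is a free submonoid of `A*`: it is generated by its minimal generating
set, which is a code. -/
def isFreeSubmonoidL {A : Type*} (M : Set (List A)) : Prop :=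
  isSubmonoidL M ∧ isCodeL (mgsL M) ∧ M = wordStar (mgsL M)

/-- `X` is complete: every word is a factor of some word of `X*`. -/
def isCompleteL {A : Type*} (X : Set (List A)) : Prop :=
  ∀ w : List A, ∃ u v : List A, u ++ w ++ v ∈ wordStar X

/-- `X` is a prefix code: `X ∩ XA⁺ = ∅`. -/
def isPrefixCodeL {A : Type*} (X : Set (List A)) : Prop :=
  ∀ x ∈ X, ∀ y ∈ X, x <+: y → x = y

/-- `X` is a suffix code: `X ∩ A⁺X = ∅`. -/
def isSuffixCodeL {A : Type*} (X : Set (List A)) : Prop :=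
  ∀ x ∈ X, ∀ y ∈ X, x <:+ y → x = y

/-!
Words of `X` have lengths `2k`, `2k+1`, `2k+2`, the words of length `2k+1` exclude the
one-letter extensions of `aᵏbᵏ`, and `aᵏbᵏ` is not a prefix of `c aᵏbᵏ` because it is not a
power of a letter; so `X` is a prefix code. Since θ reverses words and maps `X` into itself, it
is also a suffix code. Completeness holds because every word of length `2k+2` has a prefix in
`X`: its prefix `u` of length `2k+1` lies in `X` unless `u = aᵏbᵏc`, when `aᵏbᵏ` is a prefix,
or `u = c aᵏbᵏ`, when the prefix of length `2k+2` lies in `A aᵏbᵏ A`.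
-/

section Words

variable {A : Type*} {X : Set (List A)}

theorem append_mem_wordStar {x w : List A} (hx : x ∈ X) (hw : w ∈ wordStar X) :
    x ++ w ∈ wordStar X := by
  obtain ⟨l, hl, rfl⟩ := hw
  exact ⟨x :: l, by simpa using ⟨hx, hl⟩, rfl⟩

theorem mem_wordStar_of_mem {x : List A} (hx : x ∈ X) : x ∈ wordStar X :=
  ⟨[x], by simpa using hx, by simp⟩

theorem isCodeL_of_isPrefixCodeL (hnil : [] ∉ X) (hX : isPrefixCodeL X) : isCodeL X := by
  intro l
  induction l with
  | nil =>
    rintro (_ | ⟨y, m⟩) - hm h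
    · rfl
    · obtain ⟨rfl, -⟩ : y = [] ∧ _ := by simpa using h.symm
      exact absurd (hm _ mem_cons_self) hnil
  | cons x l ih =>
    rintro (_ | ⟨y, m⟩) hl hm h
    · obtain ⟨rfl, -⟩ : x = [] ∧ _ := by simpa using h
      exact absurd (hl _ mem_cons_self) hnil
    · have hx := hl x mem_cons_self
      have hy := hm y mem_cons_self
      replace h : x ++ l.flatten = y ++ m.flatten := by simpa using h
      obtain rfl : x = y := by
        rcases prefix_or_prefix_of_prefix (h ▸ prefix_append x _) (prefix_append y _) with h' | h'
        · exact hX x hx y hy h'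
        · exact (hX y hy x hx h').symm
      rw [ih m (fun w hw => hl w (mem_cons_of_mem _ hw)) (fun w hw => hm w (mem_cons_of_mem _ hw))
        (append_cancel_left h)]

theorem isSuffixCodeL_of_antimorphism {θ : List A → List A}
    (hanti : ∀ u v, θ (u ++ v) = θ v ++ θ u) (hinv : Function.Involutive θ)
    (hθX : ∀ x ∈ X, θ x ∈ X) (hX : isPrefixCodeL X) : isSuffixCodeL X := by
  rintro x hx _ hy ⟨t, rfl⟩
  exact hinv.injective (hX _ (hθX x hx) _ (hθX _ hy) ⟨θ t, (hanti t x).symm⟩)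

theorem exists_append_mem_wordStar (a : A) (L : ℕ)
    (hX : ∀ s : List A, L ≤ s.length → ∃ x ∈ X, x ≠ [] ∧ x <+: s) (w : List A) :
    ∃ v, w ++ v ∈ wordStar X := by
  induction h : w.length using Nat.strong_induction_on generalizing w with
  | _ N ih =>
  obtain ⟨x, hxX, hx0, hxs⟩ := hX (w ++ replicate L a) (by simp)
  rcases prefix_or_prefix_of_prefix hxs (prefix_append w _) with ⟨t, rfl⟩ | ⟨v, rfl⟩
  · obtain ⟨v, hv⟩ := ih t.length (by simp [← h, length_pos_iff.2 hx0]) t rfl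
    exact ⟨v, by simpa using append_mem_wordStar hxX hv⟩
  · exact ⟨v, mem_wordStar_of_mem hxX⟩

theorem isCompleteL_of_forall_exists_prefix_mem (a : A) (L : ℕ)
    (hX : ∀ s : List A, L ≤ s.length → ∃ x ∈ X, x ≠ [] ∧ x <+: s) : isCompleteL X := fun w =>
  ⟨[], by simpa using exists_append_mem_wordStar a L hX w⟩

theorem eq_replicate_of_prefix_cons {w : List A} {c : A} (h : w <+: c :: w) :
    w = replicate w.length c := by
  induction w with
  | nil => rfl
  | cons x w ih =>
    obtain ⟨rfl, h'⟩ := cons_prefix_cons.1 h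
    rw [length_cons, replicate_succ, ← ih h']

end Words

def akbk (k : ℕ) : List Bool := replicate k true ++ replicate k false

def akbkCode (k : ℕ) : Set (List Bool) :=
  ({w | w.length = 2 * k + 1} \
      ({w | ∃ c : Bool, w = c :: akbk k} ∪ {w | ∃ c : Bool, w = akbk k ++ [c]}))
    ∪ {akbk k} ∪ {w | ∃ c d : Bool, w = c :: (akbk k ++ [d])}

def flipRev (w : List Bool) : List Bool := w.reverse.map (fun c => !c)

section Akbk

variable {k : ℕ}

@[simp]
theorem length_akbk : (akbk k).length = 2 * k := by
  simp [akbk]; omega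

theorem akbk_ne_nil (hk : 1 ≤ k) : akbk k ≠ [] :=
  ne_nil_of_length_pos (by simp; omega)

theorem length_le_of_mem_akbkCode {w : List Bool} (hw : w ∈ akbkCode k) :
    w.length ≤ 2 * k + 2 := by
  rcases hw with (⟨hw, -⟩ | rfl) | ⟨c, d, rfl⟩ <;> simp_all

theorem nil_notMem_akbkCode (hk : 1 ≤ k) : [] ∉ akbkCode k := by
  rintro ((⟨h, -⟩ | h) | ⟨c, d, h⟩)
  · simp at h
  · exact akbk_ne_nil hk h.symm
  · simp at h

theorem not_akbk_prefix_cons (hk : 1 ≤ k) (c : Bool) : ¬ akbk k <+: c :: akbk k := by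
  intro h
  have hconst := eq_replicate_of_prefix_cons h
  have htrue : true ∈ akbk k := by simp [akbk]; omega
  have hfalse : false ∈ akbk k := by simp [akbk]; omega
  rw [hconst, mem_replicate] at htrue hfalse
  exact absurd (htrue.2.trans hfalse.2.symm) (by decide)

theorem isPrefixCodeL_akbkCode (hk : 1 ≤ k) : isPrefixCodeL (akbkCode k) := by
  intro x hx y hy hxy
  rcases hxy.length_le.eq_or_lt with hlen | hlen
  · exact hxy.eq_of_length hlen
  exfalso
  rcases hx with (⟨hx, hxne⟩ | rfl) | ⟨c, d, rfl⟩
  · rcases hy with (⟨hy, -⟩ | rfl) | ⟨c', d', rfl⟩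
    · exact hlen.ne (hx.trans hy.symm)
    · change x.length = _ at hx; simp at hlen; omega
    · refine hxne (Or.inl ⟨c', ?_⟩)
      exact (prefix_of_prefix_length_le hxy (prefix_append (c' :: akbk k) [d'])
        (by simpa using hx.le)).eq_of_length (by simpa using hx)
  · rcases hy with (⟨hy, hyne⟩ | rfl) | ⟨c', d', rfl⟩
    · obtain ⟨t, rfl⟩ := hxy
      obtain ⟨e, rfl⟩ := length_eq_one_iff.1 (by simp at hy; omega : t.length = 1)
      exact hyne (Or.inr ⟨e, rfl⟩)
    · exact hlen.ne rfl
    · exact not_akbk_prefix_cons hk c'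
        (prefix_of_prefix_length_le hxy (prefix_append (c' :: akbk k) [d']) (by simp))
  · rcases hy with (⟨hy, -⟩ | rfl) | ⟨c', d', rfl⟩
    · change y.length = _ at hy; simp at hlen; omega
    · simp at hlen; omega
    · simp at hlen

theorem exists_prefix_mem_akbkCode (hk : 1 ≤ k) {s : List Bool} (hs : 2 * k + 2 ≤ s.length) :
    ∃ x ∈ akbkCode k, x ≠ [] ∧ x <+: s := by
  set u := s.take (2 * k + 1) with hu
  have hulen : u.length = 2 * k + 1 := by simp [u]; omega
  by_cases hcons : ∃ c, u = c :: akbk k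
  · obtain ⟨c, hc⟩ := hcons
    refine ⟨s.take (2 * k + 2), Or.inr ⟨c, s[2 * k + 1], ?_⟩, ?_, take_prefix _ _⟩
    · rw [← take_concat_get' s (2 * k + 1), ← hu, hc, cons_append]
    · exact ne_nil_of_length_pos (by simp; omega)
  by_cases hconcat : ∃ d, u = akbk k ++ [d]
  · obtain ⟨d, hd⟩ := hconcat
    exact ⟨akbk k, Or.inl (Or.inr rfl), akbk_ne_nil hk,
      (prefix_append _ [d]).trans (hd ▸ take_prefix _ s)⟩
  · exact ⟨u, Or.inl (Or.inl ⟨hulen, by rintro (h | h) <;> tauto⟩),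
      ne_nil_of_length_pos (by omega), take_prefix _ s⟩

@[simp]
theorem flipRev_flipRev (w : List Bool) : flipRev (flipRev w) = w := by
  simp [flipRev, map_reverse, Function.comp_def]

theorem flipRev_involutive : Function.Involutive flipRev := flipRev_flipRev

theorem flipRev_append (u v : List Bool) : flipRev (u ++ v) = flipRev v ++ flipRev u := by
  simp [flipRev]

@[simp]
theorem flipRev_cons (c : Bool) (w : List Bool) : flipRev (c :: w) = flipRev w ++ [!c] := by
  simp [flipRev]

@[simp]
theorem flipRev_concat (c : Bool) (w : List Bool) : flipRev (w ++ [c]) = (!c) :: flipRev w := by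
  simp [flipRev]

@[simp]
theorem length_flipRev (w : List Bool) : (flipRev w).length = w.length := by
  simp [flipRev]

@[simp]
theorem flipRev_akbk : flipRev (akbk k) = akbk k := by
  simp [flipRev, akbk]

theorem flipRev_mem_akbkCode {w : List Bool} (hw : w ∈ akbkCode k) :
    flipRev w ∈ akbkCode k := by
  rcases hw with (⟨hw, hne⟩ | rfl) | ⟨c, d, rfl⟩
  · refine Or.inl (Or.inl ⟨by simpa using hw, ?_⟩)
    rintro (⟨c, hc⟩ | ⟨c, hc⟩) <;> rw [flipRev_involutive.eq_iff] at hc <;> simp at hc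
    · exact hne (Or.inr ⟨!c, hc⟩)
    · exact hne (Or.inl ⟨!c, hc⟩)
  · exact Or.inl (Or.inr flipRev_akbk)
  · exact Or.inr ⟨!d, !c, by simp⟩

end Akbk

/-- Over `A = {a, b}` (here `a = true`, `b = false`) with θ the anti-automorphism
exchanging the letters, for `n = 2k+1`, `k ≥ 1`, the set
`X = (Aⁿ ∖ (A aᵏbᵏ ∪ aᵏbᵏ A)) ∪ {aᵏbᵏ} ∪ A aᵏbᵏ A` is a finite non-uniform
complete bifix θ-invariant code. -/
theorem stmt10 (k : ℕ) (hk : 1 ≤ k) (n : ℕ) (hn : n = 2 * k + 1)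
    (θ : List Bool → List Bool) (hθ : θ = fun w => (w.reverse).map (fun c => !c))
    (w₀ : List Bool) (hw₀ : w₀ = List.replicate k true ++ List.replicate k false)
    (X : Set (List Bool))
    (hX : X = ({w | w.length = n} \
          ({w | ∃ c : Bool, w = c :: w₀} ∪ {w | ∃ c : Bool, w = w₀ ++ [c]}))
        ∪ {w₀} ∪ {w | ∃ c d : Bool, w = c :: (w₀ ++ [d])}) :
    X.Finite ∧ (¬ ∃ m : ℕ, ∀ w ∈ X, w.length = m) ∧ isCodeL X ∧
    isPrefixCodeL X ∧ isSuffixCodeL X ∧ isCompleteL X ∧ θ '' X ⊆ X := by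
  subst hn hθ hw₀ hX
  change (akbkCode k).Finite ∧ (¬ ∃ m : ℕ, ∀ w ∈ akbkCode k, w.length = m) ∧
    isCodeL (akbkCode k) ∧ isPrefixCodeL (akbkCode k) ∧ isSuffixCodeL (akbkCode k) ∧
    isCompleteL (akbkCode k) ∧ flipRev '' akbkCode k ⊆ akbkCode k
  have hprefix := isPrefixCodeL_akbkCode hk
  refine ⟨(finite_length_le Bool (2 * k + 2)).subset fun w => length_le_of_mem_akbkCode,
    ?_, isCodeL_of_isPrefixCodeL (nil_notMem_akbkCode hk) hprefix, hprefix,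
    isSuffixCodeL_of_antimorphism flipRev_append flipRev_involutive
      (fun _ => flipRev_mem_akbkCode) hprefix,
    isCompleteL_of_forall_exists_prefix_mem true (2 * k + 2)
      (fun _ => exists_prefix_mem_akbkCode hk),
    Set.image_subset_iff.2 fun _ => flipRev_mem_akbkCode⟩
  rintro ⟨m, hm⟩
  have hshort := hm (akbk k) (Or.inl (Or.inr rfl))
  have hlong := hm (true :: (akbk k ++ [true])) (Or.inr ⟨true, true, rfl⟩)
  simp at hshort hlong
  omega
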